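/- Let K be a field, A = K[x₁,…,xₙ], and Φ an automorphism of the monoid End A of K-algebra endomorphisms of A (with composition as multiplication). Then for every K-algebra endomorphism ψ of A, trdeg_K(image (Φ(ψ))) = trdeg_K(image ψ); that is, automorphisms of End A preserve the rank of endomorphisms. -/

import Mathlib

open MvPolynomial

/-- The transcendence degree of an algebra `A` over `K`: the supremum of cardinalities of
algebraically independent subsets (mirrors Mathlib's `Algebra.trdeg`). -/
noncomputable def algTrdeg (K A : Type*) [CommRing K] [CommRing A] [Algebra K A] : Cardinal :=
  ⨆ ι : { s : Set A // AlgebraicIndependent K ((↑) : s → A) }, Cardinal.mk ι.1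

/-!
Say that `ψ` dominates `χ` in `End A` if `ψ ∘ δ` is injective on the range of `χ` for some `δ`.
Injectivity of `γ` on the range of `χ` says exactly that `γ ∘ χ` can be cancelled on the left
wherever `χ` can, so domination is defined by the monoid structure alone and is preserved by `Φ`.
If `ψ` dominates `χ` then `rank χ ≤ rank ψ`, and `ψ` dominates the projection `eₖ` onto
`K[x₁,…,xₖ]` for `k = rank ψ`. Hence `rank (Φ ψ) ≥ rank (Φ eₖ)`, and it suffices to show
`rank (Φ eₖ) = k`; applying this to `Φ⁻¹` gives the reverse inequality.

The `eₖ` form a chain of idempotents, `eⱼ eₖ = eₖ eⱼ = eⱼ` for `j ≤ k`, and along such a chain the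
rank increases strictly: if `f ≠ e`, some nonzero `w` in the range of `e` is killed by the
retraction `f`, so `w` is transcendental over the range of `f`. Hence the ranks of
`Φ e₀, …, Φ eₙ` increase strictly inside `[0, n]`, so `rank (Φ eₖ) = k`.
-/

open Cardinal Algebra

universe u

theorem algTrdeg_eq_trdeg (K A : Type*) [CommRing K] [CommRing A] [Algebra K A] :
    algTrdeg K A = trdeg K A :=
  rfl

section Monoid

variable {M N : Type*} [Monoid M] [Monoid N]

def IsLeftCancelOn (γ χ : M) : Prop :=
  ∀ α β : M, γ * χ * α = γ * χ * β → χ * α = χ * β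

def Dominates (ψ χ : M) : Prop :=
  ∃ δ : M, IsLeftCancelOn (ψ * δ) χ

theorem IsLeftCancelOn.map {γ χ : M} (h : IsLeftCancelOn γ χ) (Φ : M ≃* N) :
    IsLeftCancelOn (Φ γ) (Φ χ) := by
  intro α β hαβ
  obtain ⟨α, rfl⟩ := Φ.surjective α
  obtain ⟨β, rfl⟩ := Φ.surjective β
  simp only [← map_mul] at hαβ ⊢
  exact congrArg Φ (h α β (Φ.injective hαβ))

theorem Dominates.map {ψ χ : M} (h : Dominates ψ χ) (Φ : M ≃* N) : Dominates (Φ ψ) (Φ χ) := by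
  obtain ⟨δ, hδ⟩ := h
  exact ⟨Φ δ, by simpa only [map_mul] using hδ.map Φ⟩

end Monoid

section Trdeg

variable {K : Type*} {A : Type u} [CommRing K] [CommRing A] [Algebra K A]

theorem Subalgebra.trdeg_le_of_le {S T : Subalgebra K A} (h : S ≤ T) : trdeg K S ≤ trdeg K T :=
  trdeg_le_of_injective (Subalgebra.inclusion h) (Subalgebra.inclusion_injective h)

theorem Subalgebra.trdeg_le (S : Subalgebra K A) : trdeg K S ≤ trdeg K A :=
  trdeg_le_of_injective S.val Subtype.val_injective

theorem AlgebraicIndependent.cardinalMk_le_trdeg_of_mem [Nontrivial K] {ι : Type u} {x : ι → A}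
    (hx : AlgebraicIndependent K x) {S : Subalgebra K A} (hxS : ∀ i, x i ∈ S) :
    #ι ≤ trdeg K S :=
  AlgebraicIndependent.cardinalMk_le_trdeg (x := fun i => (⟨x i, hxS i⟩ : S)) (hx.of_comp S.val)

theorem trdeg_range_le_of_injOn {B C : Type u} [CommRing B] [CommRing C] [Algebra K B]
    [Algebra K C] (χ : A →ₐ[K] B) (γ : B →ₐ[K] C) (h : Set.InjOn γ χ.range) :
    trdeg K χ.range ≤ trdeg K (γ.comp χ).range := by
  let γ' : χ.range →ₐ[K] (γ.comp χ).range :=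
    (γ.comp χ.range.val).codRestrict _ fun ⟨_, q, hq⟩ => ⟨q, by simp [← hq]⟩
  exact trdeg_le_of_injective γ' fun a b hab => Subtype.ext (h a.2 b.2 congr(Subtype.val $hab))

end Trdeg

theorem Subalgebra.exists_algebraicIndependent_mk_eq_trdeg {K : Type*} {A : Type u} [Field K]
    [CommRing A] [IsDomain A] [Algebra K A] (S : Subalgebra K A) :
    ∃ (ι : Type u) (x : ι → A), AlgebraicIndependent K x ∧ (∀ i, x i ∈ S) ∧ #ι = trdeg K S := by
  obtain ⟨s, hs⟩ := exists_isTranscendenceBasis K S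
  refine ⟨s, S.val ∘ (↑), hs.1.map' Subtype.val_injective, fun i => (i : S).2, ?_⟩
  exact hs.cardinalMk_eq_trdeg

theorem transcendental_of_map_eq_zero {R A : Type*} [CommRing R] [CommRing A] [IsDomain A]
    [Algebra R A] {S : Subalgebra R A} (f : A →+* A) (hS : ∀ x ∈ S, f x = x) {w : A}
    (hw : w ≠ 0) (hfw : f w = 0) : Transcendental S w := by
  rintro ⟨p, hp0, hpw⟩
  obtain ⟨q, hpq, hXq⟩ := p.exists_eq_pow_rootMultiplicity_mul_and_not_dvd hp0 0
  simp only [map_zero, sub_zero] at hpq hXq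
  have hqw : Polynomial.aeval w q = 0 := by
    rw [hpq, map_mul, map_pow, Polynomial.aeval_X] at hpw
    exact (mul_eq_zero.mp hpw).resolve_left (pow_ne_zero _ hw)
  have hfix : f.comp (algebraMap S A) = algebraMap S A := RingHom.ext fun x => hS x x.2
  have hq0 : algebraMap S A (q.coeff 0) = f (Polynomial.aeval w q) := by
    rw [Polynomial.aeval_def, Polynomial.hom_eval₂, hfix, hfw, Polynomial.eval₂_at_zero]
  rw [hqw, map_zero] at hq0
  exact hXq (Polynomial.X_dvd_iff.mpr (Subtype.ext hq0))

theorem trdeg_range_add_one_le {K A : Type*} [Field K] [CommRing A] [IsDomain A] [Algebra K A]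
    {f e : A →ₐ[K] A} (hf : IsIdempotentElem f) (hfe : f * e = f) (hef : e * f = f)
    (hne : f ≠ e) : trdeg K f.range + 1 ≤ trdeg K e.range := by
  obtain ⟨p, hp⟩ : ∃ p, f p ≠ e p := by
    by_contra! h
    exact hne (AlgHom.ext h)
  have hfw : f (e p - f p) = 0 := by
    rw [map_sub, ← AlgHom.mul_apply, ← AlgHom.mul_apply, hfe, hf.eq, sub_self]
  have hle : f.range ≤ e.range := by
    rintro _ ⟨q, rfl⟩
    exact (AlgHom.mem_range e).mpr ⟨f q, congr($hef q)⟩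
  obtain ⟨ι, x, hx, hxf, hcard⟩ := f.range.exists_algebraicIndependent_mk_eq_trdeg
  have hfix : ∀ y ∈ adjoin K (Set.range x), f.toRingHom y = y := by
    intro y hy
    obtain ⟨q, rfl⟩ := adjoin_le (Set.range_subset_iff.mpr hxf) hy
    rw [AlgHom.toRingHom_eq_coe, RingHom.coe_coe, ← AlgHom.mul_apply, hf.eq]
  have htr := transcendental_of_map_eq_zero _ hfix (sub_ne_zero.mpr (Ne.symm hp)) hfw
  rw [← hcard, ← mk_option]
  refine ((hx.option_iff_transcendental _).mpr htr).cardinalMk_le_trdeg_of_mem ?_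
  rintro (_ | i)
  · exact sub_mem ⟨p, rfl⟩ (hle ⟨p, rfl⟩)
  · exact hle (hxf i)

theorem IsLeftCancelOn.injOn_range {σ R : Type*} [CommSemiring R] [Nonempty σ]
    {γ χ : MvPolynomial σ R →ₐ[R] MvPolynomial σ R} (h : IsLeftCancelOn γ χ) :
    Set.InjOn γ χ.range := by
  rintro _ ⟨u, rfl⟩ _ ⟨v, rfl⟩ huv
  have hconst := h (aeval fun _ => u) (aeval fun _ => v) (algHom_ext fun _ => by simpa using huv)
  simpa using congr($hconst (X (Classical.arbitrary σ)))

theorem Dominates.trdeg_range_le {σ K : Type*} [CommRing K] [Nonempty σ]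
    {ψ χ : MvPolynomial σ K →ₐ[K] MvPolynomial σ K} (h : Dominates ψ χ) :
    trdeg K χ.range ≤ trdeg K ψ.range := by
  obtain ⟨δ, hδ⟩ := h
  calc trdeg K χ.range ≤ trdeg K ((ψ * δ).comp χ).range :=
        trdeg_range_le_of_injOn χ _ hδ.injOn_range
    _ ≤ trdeg K ψ.range := Subalgebra.trdeg_le_of_le (AlgHom.range_comp_le_range (δ.comp χ) ψ)

theorem Nat.eq_self_of_lt_succ_of_le {m : ℕ → ℕ} {n : ℕ} (hstep : ∀ k < n, m k < m (k + 1))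
    (hn : m n ≤ n) : ∀ k ≤ n, m k = k := by
  have hlow : ∀ k ≤ n, k ≤ m k := (strictMonoOn_Iic_of_lt_succ hstep).Iic_id_le
  have hup : ∀ d ≤ n, m (n - d) + d ≤ m n := by
    intro d
    induction d with
    | zero => simp
    | succ d ih =>
      intro hd
      have h := hstep (n - (d + 1)) (by omega)
      rw [show n - (d + 1) + 1 = n - d by omega] at h
      have := ih (by omega)
      omega
  intro k hk
  have := hup (n - k) (by omega)
  rw [Nat.sub_sub_self hk] at this
  have := hlow k hk
  omega

section FinVars

variable {K : Type*} [Field K] {n : ℕ}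

theorem trdeg_le_natCast (S : Subalgebra K (MvPolynomial (Fin n) K)) : trdeg K S ≤ n := by
  simpa using S.trdeg_le

variable (K n) in
noncomputable def projFirst (k : ℕ) : MvPolynomial (Fin n) K →ₐ[K] MvPolynomial (Fin n) K :=
  aeval fun i => if (i : ℕ) < k then X i else 0

@[simp]
theorem projFirst_X (k : ℕ) (i : Fin n) :
    projFirst K n k (X i) = if (i : ℕ) < k then X i else 0 :=
  aeval_X _ _

theorem projFirst_mul_projFirst (j k : ℕ) :
    projFirst K n j * projFirst K n k = projFirst K n (min j k) := by
  refine algHom_ext fun i => ?_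
  rw [AlgHom.mul_apply]
  by_cases hj : (i : ℕ) < j <;> by_cases hk : (i : ℕ) < k <;> simp [hj, hk]

theorem projFirst_ne_succ {k : ℕ} (hk : k < n) : projFirst K n k ≠ projFirst K n (k + 1) := by
  intro h
  have hX : (0 : MvPolynomial (Fin n) K) = X ⟨k, hk⟩ := by simpa using congr($h (X ⟨k, hk⟩))
  exact X_ne_zero _ hX.symm

theorem dominates_projFirst {ψ : MvPolynomial (Fin n) K →ₐ[K] MvPolynomial (Fin n) K} {k : ℕ}
    (hk : k ≤ n) (hψ : (k : Cardinal) ≤ trdeg K ψ.range) : Dominates ψ (projFirst K n k) := by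
  obtain ⟨ι, x, hx, hxψ, hcard⟩ := ψ.range.exists_algebraicIndependent_mk_eq_trdeg
  obtain ⟨ι_k⟩ : Nonempty (Fin k ↪ ι) := lift_mk_le'.mp (by simpa [hcard] using hψ)
  have hy : AlgebraicIndependent K (x ∘ ι_k) := hx.comp ι_k ι_k.injective
  choose g hg using fun i => (AlgHom.mem_range ψ).mp (hxψ (ι_k i))
  -- `ψ ∘ δ` maps `x₁, …, xₖ` to the algebraically independent `x ∘ ι_k`.
  let δ : MvPolynomial (Fin n) K →ₐ[K] MvPolynomial (Fin n) K :=
    aeval fun j => if h : (j : ℕ) < k then g ⟨j, h⟩ else 0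
  let restrict : MvPolynomial (Fin n) K →ₐ[K] MvPolynomial (Fin k) K :=
    aeval fun j => if h : (j : ℕ) < k then X ⟨j, h⟩ else 0
  have hproj : projFirst K n k = (rename (Fin.castLE hk)).comp restrict := by
    refine algHom_ext fun i => ?_
    by_cases hi : (i : ℕ) < k <;> simp [restrict, hi]
  have hψδ : (ψ * δ).comp (rename (Fin.castLE hk)) = aeval (x ∘ ι_k) := by
    refine algHom_ext fun i => ?_
    simp [δ, hg]
  refine ⟨δ, fun α β hαβ => ?_⟩
  have hres : restrict.comp α = restrict.comp β := by
    refine AlgHom.ext fun p => hy ?_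
    simpa [hproj, ← hψδ, AlgHom.mul_apply] using congr($hαβ p)
  rw [hproj]
  exact congrArg (rename (Fin.castLE hk)).comp hres

theorem trdeg_range_map_projFirst
    (Φ : (MvPolynomial (Fin n) K →ₐ[K] MvPolynomial (Fin n) K) ≃*
      (MvPolynomial (Fin n) K →ₐ[K] MvPolynomial (Fin n) K)) {k : ℕ} (hk : k ≤ n) :
    trdeg K (Φ (projFirst K n k)).range = k := by
  choose m hm using fun j =>
    lt_aleph0.mp ((trdeg_le_natCast (Φ (projFirst K n j)).range).trans_lt natCast_lt_aleph0)
  have hmul (a b : ℕ) :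
      Φ (projFirst K n a) * Φ (projFirst K n b) = Φ (projFirst K n (min a b)) := by
    rw [← map_mul, projFirst_mul_projFirst]
  have hstep : ∀ j < n, m j < m (j + 1) := by
    intro j hj
    have h := trdeg_range_add_one_le (by rw [IsIdempotentElem, hmul, min_self])
      (by rw [hmul, min_eq_left j.le_succ]) (by rw [hmul, min_eq_right j.le_succ])
      (Φ.injective.ne (projFirst_ne_succ hj))
    rw [hm, hm] at h
    exact_mod_cast h
  have hn : m n ≤ n := by exact_mod_cast hm n ▸ trdeg_le_natCast _
  rw [hm, Nat.eq_self_of_lt_succ_of_le hstep hn k hk]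

theorem trdeg_range_le_map
    (Φ : (MvPolynomial (Fin n) K →ₐ[K] MvPolynomial (Fin n) K) ≃*
      (MvPolynomial (Fin n) K →ₐ[K] MvPolynomial (Fin n) K))
    (ψ : MvPolynomial (Fin n) K →ₐ[K] MvPolynomial (Fin n) K) :
    trdeg K ψ.range ≤ trdeg K (Φ ψ).range := by
  obtain ⟨k, hk⟩ := lt_aleph0.mp ((trdeg_le_natCast ψ.range).trans_lt natCast_lt_aleph0)
  have hkn : k ≤ n := by exact_mod_cast hk ▸ trdeg_le_natCast ψ.range
  obtain rfl | hn := n.eq_zero_or_pos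
  · simp [hk, Nat.le_zero.mp hkn]
  have : Nonempty (Fin n) := ⟨⟨0, hn⟩⟩
  calc trdeg K ψ.range = k := hk
    _ = trdeg K (Φ (projFirst K n k)).range := (trdeg_range_map_projFirst Φ hkn).symm
    _ ≤ trdeg K (Φ ψ).range := ((dominates_projFirst hkn hk.ge).map Φ).trdeg_range_le

end FinVars

/-- Automorphisms of the endomorphism monoid of `K[x₁,…,xₙ]` preserve the rank
(transcendence degree of the image) of endomorphisms. -/
theorem stmt_4 (K : Type) [Field K] (n : ℕ)
    (Φ : (MvPolynomial (Fin n) K →ₐ[K] MvPolynomial (Fin n) K) ≃*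
         (MvPolynomial (Fin n) K →ₐ[K] MvPolynomial (Fin n) K))
    (ψ : MvPolynomial (Fin n) K →ₐ[K] MvPolynomial (Fin n) K) :
    algTrdeg K ↥(Φ ψ).range = algTrdeg K ↥ψ.range := by
  rw [algTrdeg_eq_trdeg, algTrdeg_eq_trdeg]
  have h := trdeg_range_le_map Φ.symm (Φ ψ)
  rw [MulEquiv.symm_apply_apply] at h
  exact le_antisymm h (trdeg_range_le_map Φ ψ)
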